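/- For mean estimation under a sampling rule π̃ depending on (X,Y), if we additionally require π̃_opt ≤ 1, i.e., if p·|Y−f(X)|/E|Y−f(X)| ≤ 1 a.s., then the minimum value of the variance-relevant objective equals E[(Y−f(X))²/π̃_opt(X,Y)] = (E|Y−f(X)|)²/p, so the minimized asymptotic variance of the active estimator is (1/n)·(Var(Y) − E[(Y−f(X))²] + (E|Y−f(X)|)²/p). -/

import Mathlib

/-!
With `π = p |g| / E|g|` for the residual `g = Y - f(X)`, the integrand `g² / π` is pointwise
`(E|g| / p) |g|`, so `E[g² / π] = (E|g|)² / p`; the variance objective is then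
`E[g² / π] - E[g²]` by linearity.
-/

open MeasureTheory ProbabilityTheory

/-- The paper's oracle rule `π̃_opt`, for the residual `g = Y - f(X)`. -/
noncomputable def proportionalRule {Ω : Type*} [MeasurableSpace Ω] (μ : Measure Ω)
    (p : ℝ) (g : Ω → ℝ) (ω : Ω) : ℝ :=
  p * |g ω| / ∫ ω', |g ω'| ∂μ

-- At `d = 0` both sides vanish because `0 / 0 = 0`.
lemma sq_div_mul_abs_div (d p A : ℝ) : d ^ 2 / (p * |d| / A) = A / p * |d| := by
  rw [← sq_abs]
  rcases eq_or_ne |d| 0 with hd | hd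
  · simp [hd]
  · field_simp

section ProportionalRule

variable {Ω : Type*} [MeasurableSpace Ω] {μ : Measure Ω} {g : Ω → ℝ}

lemma sq_div_proportionalRule (p : ℝ) (ω : Ω) :
    g ω ^ 2 / proportionalRule μ p g ω = (∫ ω', |g ω'| ∂μ) / p * |g ω| :=
  sq_div_mul_abs_div _ _ _

lemma integral_sq_div_proportionalRule (p : ℝ) :
    ∫ ω, g ω ^ 2 / proportionalRule μ p g ω ∂μ = (∫ ω, |g ω| ∂μ) ^ 2 / p := by
  simp_rw [sq_div_proportionalRule, integral_const_mul]
  ring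

lemma integral_sq_mul_inv_proportionalRule_sub_one (p : ℝ)
    (hg_sq : Integrable (fun ω => g ω ^ 2) μ) (hg_abs : ∫ ω, |g ω| ∂μ ≠ 0) :
    ∫ ω, g ω ^ 2 * (1 / proportionalRule μ p g ω - 1) ∂μ
      = (∫ ω, |g ω| ∂μ) ^ 2 / p - ∫ ω, g ω ^ 2 ∂μ := by
  have h_ratio : Integrable (fun ω => g ω ^ 2 / proportionalRule μ p g ω) μ := by
    simp_rw [sq_div_proportionalRule]
    exact (Integrable.of_integral_ne_zero hg_abs).const_mul _
  simp_rw [mul_sub, mul_one, mul_one_div]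
  rw [integral_sub h_ratio hg_sq, integral_sq_div_proportionalRule]

end ProportionalRule

theorem oracle_rule_minimized_variance_general
    {Ω 𝒳 : Type*} [MeasurableSpace Ω] [MeasurableSpace 𝒳]
    (μ : Measure Ω)
    (X : Ω → 𝒳) (Y : Ω → ℝ) (f : 𝒳 → ℝ) (p : ℝ) (n : ℕ)
    (hsq_int : Integrable (fun ω => (Y ω - f (X ω)) ^ 2) μ)
    (habs_pos : 0 < ∫ ω, |Y ω - f (X ω)| ∂μ)
    (πopt : Ω → ℝ)
    (hπopt : πopt = fun ω => p * |Y ω - f (X ω)| / ∫ ω', |Y ω' - f (X ω')| ∂μ) :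
    ∫ ω, (Y ω - f (X ω)) ^ 2 / πopt ω ∂μ
        = (∫ ω, |Y ω - f (X ω)| ∂μ) ^ 2 / p ∧
      (1 / (n : ℝ)) * (variance Y μ + ∫ ω, (Y ω - f (X ω)) ^ 2 * (1 / πopt ω - 1) ∂μ)
        = (1 / (n : ℝ)) * (variance Y μ - ∫ ω, (Y ω - f (X ω)) ^ 2 ∂μ
            + (∫ ω, |Y ω - f (X ω)| ∂μ) ^ 2 / p) := by
  obtain rfl : πopt = proportionalRule μ p (fun ω => Y ω - f (X ω)) := hπopt
  refine ⟨integral_sq_div_proportionalRule p, ?_⟩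
  rw [integral_sq_mul_inv_proportionalRule_sub_one p hsq_int habs_pos.ne']
  ring

/-- **Minimized variance under the label-dependent oracle rule.**
If `π̃_opt(X,Y) = p·|Y−f(X)|/E|Y−f(X)|` takes values in `(0,1]` a.s., then the
variance-relevant objective attains the value
`E[(Y−f(X))²/π̃_opt(X,Y)] = (E|Y−f(X)|)²/p`, and hence the minimized variance of the
active mean estimator equals
`(1/n)·(Var(Y) − E[(Y−f(X))²] + (E|Y−f(X)|)²/p)`. -/
theorem oracle_rule_minimized_variance
    {Ω 𝒳 : Type*} [MeasurableSpace Ω] [MeasurableSpace 𝒳]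
    (μ : Measure Ω) [IsProbabilityMeasure μ]
    (X : Ω → 𝒳) (Y : Ω → ℝ) (f : 𝒳 → ℝ) (p : ℝ) (n : ℕ)
    (hX : Measurable X) (hY : Measurable Y) (hf : Measurable f)
    (hn : 0 < n) (hp : p ∈ Set.Ioo (0 : ℝ) 1)
    (hY2 : MemLp Y 2 μ)
    (hsq_int : Integrable (fun ω => (Y ω - f (X ω)) ^ 2) μ)
    (habs_pos : 0 < ∫ ω, |Y ω - f (X ω)| ∂μ)
    (πopt : Ω → ℝ)
    (hπopt : πopt = fun ω => p * |Y ω - f (X ω)| / ∫ ω', |Y ω' - f (X ω')| ∂μ)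
    (hπopt1 : ∀ᵐ ω ∂μ, πopt ω ∈ Set.Ioc (0 : ℝ) 1) :
    ∫ ω, (Y ω - f (X ω)) ^ 2 / πopt ω ∂μ
        = (∫ ω, |Y ω - f (X ω)| ∂μ) ^ 2 / p ∧
      (1 / (n : ℝ)) * (variance Y μ + ∫ ω, (Y ω - f (X ω)) ^ 2 * (1 / πopt ω - 1) ∂μ)
        = (1 / (n : ℝ)) * (variance Y μ - ∫ ω, (Y ω - f (X ω)) ^ 2 ∂μ
            + (∫ ω, |Y ω - f (X ω)| ∂μ) ^ 2 / p) :=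
  oracle_rule_minimized_variance_general μ X Y f p n hsq_int habs_pos πopt hπopt
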